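/- arXiv:2407.04410 — 3 statements merged into one kernel-verified Lean document; each statement's English description precedes it below -/
import Mathlib

section
/- Let G be a locally compact Abelian group, H an open subgroup of G, Ω ⊆ H, and φ: H → ℝ a continuous positive definite function with φ(0)=1, φ ∈ L¹(H), and supp φ₊ ⊆ Ω. Then the trivial extension φ̃: G → ℝ (equal to φ on H and 0 off H) is continuous, positive definite, satisfies φ̃(0)=1, φ̃ ∈ L¹(G), and supp φ̃₊ ⊆ Ω. -/
open MeasureTheory Filter Topology Complex ComplexOrder Pointwise Classical

/-- A complex-valued function on an Abelian group is positive definite. -/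
def IsPosDefC {G : Type*} [AddCommGroup G] (f : G → ℂ) : Prop :=
  ∀ (n : ℕ) (c : Fin n → ℂ) (g : Fin n → G),
    0 ≤ ∑ i, ∑ j, c i * (starRingEnd ℂ) (c j) * f (g i - g j)

/-- A real-valued function on an Abelian group is positive definite. -/
def IsPosDefR {G : Type*} [AddCommGroup G] (f : G → ℝ) : Prop :=
  ∀ (n : ℕ) (c : Fin n → ℂ) (g : Fin n → G),
    0 ≤ ∑ i, ∑ j, c i * (starRingEnd ℂ) (c j) * (f (g i - g j) : ℂ)

/-!
Since `H` is open it is also closed, so `H` and its complement form an open cover of `G`; hence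
continuity, integrability and the support of `φ` transfer from `H` to `G`. For positive
definiteness, group the points `gᵢ` of a quadratic form by their `H`-coset: `φ̃(gᵢ - gⱼ)`
vanishes across cosets, so the form splits into one form per coset, and translating each coset
into `H` turns it into a quadratic form of `φ`.
-/

theorem IsClopen.continuous_of_continuous_domRestrict {X Y : Type*} [TopologicalSpace X]
    [TopologicalSpace Y] [Zero Y] {s : Set X} {f : X → Y} (hs : IsClopen s)
    (hf : Continuous (s.domRestrict f)) (hsupp : Function.support f ⊆ s) : Continuous f := by
  have hon : ContinuousOn f s := continuousOn_iff_continuous_domRestrict.mpr hf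
  have hoff : ContinuousOn f sᶜ :=
    continuousOn_const.congr fun x hx => Function.support_subset_iff'.mp hsupp x hx
  rw [← continuousOn_univ, ← Set.union_compl_self s]
  exact hon.union_of_isOpen hoff hs.isOpen hs.compl.isOpen

theorem IsClosed.closure_eq_image_closure_preimage_val {X : Type*} [TopologicalSpace X]
    {s t : Set X} (hs : IsClosed s) (hts : t ⊆ s) :
    closure t = Subtype.val '' closure (Subtype.val ⁻¹' t : Set s) := by
  rw [← hs.isClosedEmbedding_subtypeVal.closure_image_eq, Set.image_preimage_eq_inter_range,
    Subtype.range_coe, Set.inter_eq_left.mpr hts]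

theorem integrable_of_integrable_comap_subtypeVal {X E : Type*} [MeasurableSpace X]
    [NormedAddCommGroup E] {μ : Measure X} {s : Set X} {f : X → E} (hs : MeasurableSet s)
    (hf : Integrable (f ∘ Subtype.val : s → E) (μ.comap Subtype.val))
    (hsupp : Function.support f ⊆ s) : Integrable f μ :=
  (integrableOn_iff_integrable_of_support_subset hsupp).mp
    ((integrableOn_iff_comap_subtypeVal hs).mpr hf)

theorem IsPosDefR.of_restrict_addSubgroup {G : Type*} [AddCommGroup G] {H : AddSubgroup G}
    {f : G → ℝ} (hpd : IsPosDefR fun x : H => f x) (hsupp : Function.support f ⊆ H) :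
    IsPosDefR f := by
  intro n c g
  set q : Fin n → G ⧸ H := fun i => g i
  -- `h i` is the translate of `g i` into `H` by the chosen representative of its coset
  set h : Fin n → H := fun i =>
    ⟨g i - (q i).out, QuotientAddGroup.eq_iff_sub_mem.mp (QuotientAddGroup.out_eq' (q i)).symm⟩
  set c' : G ⧸ H → Fin n → ℂ := fun Q i => if q i = Q then c i else 0
  have hterm : ∀ i j, c i * starRingEnd ℂ (c j) * (f (g i - g j) : ℂ) =
      ∑ Q ∈ Finset.univ.image q, c' Q i * starRingEnd ℂ (c' Q j) * (f (h i - h j) : ℂ) := by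
    intro i j
    by_cases hij : q i = q j
    · have hh : ((h i : G) - h j) = g i - g j := by
        simp only [h, hij]
        abel
      rw [Finset.sum_eq_single (q i)]
      · simp [c', hij, hh]
      · intro Q _ hQ
        simp [c', Ne.symm hQ]
      · exact fun hi => (hi (Finset.mem_image_of_mem q (Finset.mem_univ i))).elim
    · have hg : f (g i - g j) = 0 :=
        Function.support_subset_iff'.mp hsupp _ fun hmem =>
          hij (QuotientAddGroup.eq_iff_sub_mem.mpr hmem)
      rw [hg, Finset.sum_eq_zero]
      · simp
      · intro Q _
        by_cases hiQ : q i = Q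
        · simp [c', hiQ ▸ Ne.symm hij]
        · simp [c', hiQ]
  calc (0 : ℂ)
      ≤ ∑ Q ∈ Finset.univ.image q, ∑ i, ∑ j,
          c' Q i * starRingEnd ℂ (c' Q j) * (f (h i - h j) : ℂ) :=
        Finset.sum_nonneg fun Q _ => hpd n (c' Q) h
    _ = ∑ i, ∑ j, c i * starRingEnd ℂ (c j) * (f (g i - g j) : ℂ) := by
        simp only [hterm]
        rw [Finset.sum_comm]
        exact Finset.sum_congr rfl fun i _ => Finset.sum_comm

theorem trivial_extension_in_gclass_general
    {G : Type*} [AddCommGroup G] [TopologicalSpace G] [IsTopologicalAddGroup G]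
    [MeasurableSpace G] [BorelSpace G]
    (μ : Measure G)
    (H : AddSubgroup G) (hH : IsOpen (H : Set G))
    (Ω : Set G)
    (φ : H → ℝ) (hφ_cont : Continuous φ) (hφ_pd : IsPosDefR φ) (hφ0 : φ 0 = 1)
    (hφ_int : Integrable φ (μ.comap (Subtype.val : H → G)))
    (hφ_supp : (Subtype.val : H → G) '' closure {x : H | max (φ x) 0 ≠ 0} ⊆ Ω)
    (φext : G → ℝ) (hext : ∀ g : G, φext g = if h : g ∈ H then φ ⟨g, h⟩ else 0) :
    Continuous φext ∧ IsPosDefR φext ∧ φext 0 = 1 ∧ Integrable φext μ ∧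
      closure {g : G | max (φext g) 0 ≠ 0} ⊆ Ω := by
  have hHc : IsClopen (H : Set G) := ⟨H.isClosed_of_isOpen hH, hH⟩
  have hrestrict : (fun x : H => φext x) = φ := funext fun x => by simp [hext]
  have hsupp : Function.support φext ⊆ H :=
    Function.support_subset_iff'.mpr fun g hg => (hext g).trans (dif_neg hg)
  have hpos : {g : G | max (φext g) 0 ≠ 0} ⊆ H := fun g hg => hsupp fun h0 => hg (by simp [h0])
  subst hrestrict
  refine ⟨hHc.continuous_of_continuous_domRestrict hφ_cont hsupp,
    hφ_pd.of_restrict_addSubgroup hsupp, hφ0,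
    integrable_of_integrable_comap_subtypeVal hH.measurableSet hφ_int hsupp, ?_⟩
  rwa [hHc.isClosed.closure_eq_image_closure_preimage_val hpos]

theorem trivial_extension_in_gclass
    {G : Type*} [AddCommGroup G] [TopologicalSpace G] [IsTopologicalAddGroup G]
    [LocallyCompactSpace G] [T2Space G] [MeasurableSpace G] [BorelSpace G]
    (μ : Measure G) [μ.IsAddHaarMeasure]
    (H : AddSubgroup G) (hH : IsOpen (H : Set G))
    (Ω : Set G) (hΩH : Ω ⊆ (H : Set G))
    (φ : H → ℝ) (hφ_cont : Continuous φ) (hφ_pd : IsPosDefR φ) (hφ0 : φ 0 = 1)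
    (hφ_int : Integrable φ (μ.comap (Subtype.val : H → G)))
    (hφ_supp : (Subtype.val : H → G) '' closure {x : H | max (φ x) 0 ≠ 0} ⊆ Ω)
    (φext : G → ℝ) (hext : ∀ g : G, φext g = if h : g ∈ H then φ ⟨g, h⟩ else 0) :
    Continuous φext ∧ IsPosDefR φext ∧ φext 0 = 1 ∧ Integrable φext μ ∧
      closure {g : G | max (φext g) 0 ≠ 0} ⊆ Ω :=
  trivial_extension_in_gclass_general μ H hH Ω φ hφ_cont hφ_pd hφ0 hφ_int hφ_supp φext hext
end

section
/- Let G be a locally compact Abelian group, f a continuous positive definite function on G, V a symmetric neighbourhood of 0 with compact closure, and χ := 1_V / λ_G(V). Then for all x ∈ G: |f(x) − (f * χ)(x)|² ≤ 2 f(0) λ_G(V)⁻¹ ∫_V (f(0) − Re f(g)) dλ_G(g). -/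
/-!
Evaluating the positive definite form of `f` at the points `0, x, y` with coefficients
`t (f x - f y), 1, -1` gives a real quadratic in `t` that is nonnegative, and its discriminant
yields Krein's inequality `‖f x - f y‖² ≤ 2 f(0) (f(0) - Re f(x - y))`.
Since `V` is symmetric, `f x - (f * χ) x` is the average over `V` of `g ↦ f x - f (x + g)`;
by Jensen the square of its norm is at most the average of `‖f x - f (x + g)‖²`, which Krein's
inequality bounds by the average of `2 f(0) (f(0) - Re f g)`.
-/

open MeasureTheory Filter Topology Complex ComplexOrder Pointwise

open ComplexConjugate

namespace IsPosDefC

variable {G : Type*} [AddCommGroup G] {f : G → ℂ}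

theorem map_zero_nonneg (hf : IsPosDefC f) : 0 ≤ f 0 := by
  simpa using hf 1 ![1] ![0]

theorem map_neg (hf : IsPosDefC f) (x : G) : f (-x) = conj (f x) := by
  have h0 := hf.map_zero_nonneg
  have h1 := hf 2 ![1, 1] ![0, x]
  have h2 := hf 2 ![1, I] ![0, x]
  apply Complex.ext <;> simp [Fin.sum_univ_two, Complex.le_def] at h0 h1 h2 ⊢ <;> linarith

theorem norm_sub_sq_le (hf : IsPosDefC f) (x y : G) :
    ‖f x - f y‖ ^ 2 ≤ 2 * (f 0).re * ((f 0).re - (f (x - y)).re) := by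
  obtain ⟨ha, h0⟩ := Complex.nonneg_iff.1 hf.map_zero_nonneg
  have hyx : f (y - x) = conj (f (x - y)) := by rw [← neg_sub, hf.map_neg]
  have hquad : ∀ t : ℝ, 0 ≤ (f 0).re * ‖f x - f y‖ ^ 2 * (t * t) + 2 * ‖f x - f y‖ ^ 2 * t +
      2 * ((f 0).re - (f (x - y)).re) := fun t => by
    have h := hf 3 ![(t : ℂ) * (f x - f y), 1, -1] ![0, x, y]
    simp only [Fin.sum_univ_three, Fin.isValue, Matrix.cons_val_zero, map_mul, conj_ofReal, map_sub,
      sub_zero, Matrix.cons_val_one, map_one, mul_one, Matrix.cons_val, _root_.map_neg, mul_neg,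
      neg_mul, zero_sub, hf.map_neg, one_mul, sub_self, hyx, neg_neg, Complex.le_def, zero_re,
      add_re, mul_re, ofReal_re, sub_re, ofReal_im, sub_im, zero_mul, conj_re, conj_im,
      sub_neg_eq_add, mul_im, add_zero, ← h0, mul_zero, neg_re, neg_add_rev, neg_sub, zero_im,
      add_im, zero_add, neg_im] at h
    rw [Complex.sq_norm, Complex.normSq_apply, sub_re, sub_im]
    nlinarith [h.1]
  have hC := hquad 0
  have hD := discrim_le_zero hquad
  rw [discrim] at hD
  simp only [mul_zero, add_zero, zero_add] at hC
  rcases (sq_nonneg ‖f x - f y‖).eq_or_lt with hw | hw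
  · rw [← hw]; exact mul_nonneg (mul_nonneg zero_le_two ha) (by linarith)
  · nlinarith

end IsPosDefC

section SetAverage

variable {α E : Type*} [MeasurableSpace α] {μ : Measure α} {s : Set α}
  [NormedAddCommGroup E] [NormedSpace ℝ E] [CompleteSpace E]

theorem const_sub_setAverage (hs₀ : μ s ≠ 0) (hs : μ s ≠ ⊤) (c : E) {u : α → E}
    (hu : IntegrableOn u s μ) : c - ⨍ x in s, u x ∂μ = ⨍ x in s, (c - u x) ∂μ := by
  have hs' : μ.real s ≠ 0 := (ENNReal.toReal_pos hs₀ hs).ne'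
  rw [setAverage_eq, setAverage_eq, integral_sub (integrableOn_const (C := c) hs) hu,
    setIntegral_const, smul_sub, smul_smul, inv_mul_cancel₀ hs', one_smul]

theorem setAverage_mono_on {u v : α → ℝ} (hu : IntegrableOn u s μ) (hv : IntegrableOn v s μ)
    (hs : MeasurableSet s) (h : ∀ x ∈ s, u x ≤ v x) : ⨍ x in s, u x ∂μ ≤ ⨍ x in s, v x ∂μ := by
  rw [setAverage_eq, setAverage_eq]
  exact smul_le_smul_of_nonneg_left (setIntegral_mono_on hu hv hs h) (by positivity)

theorem sq_norm_setAverage_le (hs₀ : μ s ≠ 0) (hs : μ s ≠ ⊤) {u : α → E}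
    (hu : IntegrableOn u s μ) (hu₂ : IntegrableOn (fun x => ‖u x‖ ^ 2) s μ) :
    ‖⨍ x in s, u x ∂μ‖ ^ 2 ≤ ⨍ x in s, ‖u x‖ ^ 2 ∂μ :=
  ((convexOn_norm convex_univ).pow (fun _ _ => norm_nonneg _) 2).map_set_average_le
    (continuous_norm.pow 2).continuousOn isClosed_univ hs₀ hs (by simp) hu hu₂

end SetAverage

theorem Continuous.integrableOn_of_isCompact_closure {X E : Type*} [TopologicalSpace X]
    [MeasurableSpace X] [OpensMeasurableSpace X] {μ : Measure X} [IsFiniteMeasureOnCompacts μ]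
    [NormedAddCommGroup E] {f : X → E} (hf : Continuous f) {s : Set X}
    (hs : IsCompact (closure s)) : IntegrableOn f s μ :=
  (hf.continuousOn.integrableOn_compact' hs isClosed_closure.measurableSet).mono_set subset_closure

theorem integral_mul_indicator_sub_eq_setAverage {G : Type*} [AddCommGroup G] [MeasurableSpace G]
    [MeasurableAdd G] (μ : Measure G) [μ.IsAddLeftInvariant] {V : Set G} (hV_symm : V = -V)
    (hV : MeasurableSet V) (f : G → ℂ) (x : G) :
    ∫ y, f y * ((V.indicator (fun _ => (μ V).toReal⁻¹) (x - y) : ℝ) : ℂ) ∂μ =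
      ⨍ g in V, f (x + g) ∂μ := by
  rw [← integral_add_left_eq_self _ x, setAverage_eq, ← integral_indicator hV,
    ← integral_smul]
  congr 1 with g
  have hg : -g ∈ V ↔ g ∈ V := by rw [← Set.mem_neg, ← hV_symm]
  by_cases h : g ∈ V <;> simp [h, hg, measureReal_def, mul_comm]

theorem posDef_convolution_approx_inequality_general
    {G : Type*} [AddCommGroup G] [TopologicalSpace G] [IsTopologicalAddGroup G]
    [MeasurableSpace G] [BorelSpace G]
    (μ : Measure G) [μ.IsAddHaarMeasure]
    (f : G → ℂ) (hf_cont : Continuous f) (hf_pd : IsPosDefC f)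
    (V : Set G) (hV_symm : V = -V) (hV_nhds : V ∈ 𝓝 (0 : G))
    (hV_cpt : IsCompact (closure V)) (hV_meas : MeasurableSet V)
    (χ : G → ℝ) (hχ : χ = Set.indicator V (fun _ => ((μ V).toReal)⁻¹)) :
    ∀ x : G,
      ‖f x - ∫ y, f y * (χ (x - y) : ℂ) ∂μ‖ ^ 2 ≤
        2 * (f 0).re * ((μ V).toReal)⁻¹ *
          ∫ g in V, ((f 0).re - (f g).re) ∂μ := by
  intro x
  subst hχ
  have hV₀ : μ V ≠ 0 := (μ.measure_pos_of_mem_nhds hV_nhds).ne'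
  have hV : μ V ≠ ⊤ := ((measure_mono subset_closure).trans_lt hV_cpt.measure_lt_top).ne
  have hu : Continuous fun g => f x - f (x + g) := by fun_prop
  have hu₂ : IntegrableOn (fun g => ‖f x - f (x + g)‖ ^ 2) V μ :=
    (hu.norm.pow 2).integrableOn_of_isCompact_closure hV_cpt
  have hbound : ∀ g, ‖f x - f (x + g)‖ ^ 2 ≤ 2 * (f 0).re * ((f 0).re - (f g).re) := fun g => by
    simpa [hf_pd.map_neg] using hf_pd.norm_sub_sq_le x (x + g)
  have hbound_int : IntegrableOn (fun g => 2 * (f 0).re * ((f 0).re - (f g).re)) V μ :=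
    (by fun_prop : Continuous _).integrableOn_of_isCompact_closure hV_cpt
  rw [integral_mul_indicator_sub_eq_setAverage μ hV_symm hV_meas, const_sub_setAverage hV₀ hV _
    ((by fun_prop : Continuous fun g => f (x + g)).integrableOn_of_isCompact_closure hV_cpt)]
  calc ‖⨍ g in V, (f x - f (x + g)) ∂μ‖ ^ 2
      ≤ ⨍ g in V, ‖f x - f (x + g)‖ ^ 2 ∂μ :=
        sq_norm_setAverage_le hV₀ hV (hu.integrableOn_of_isCompact_closure hV_cpt) hu₂
    _ ≤ ⨍ g in V, 2 * (f 0).re * ((f 0).re - (f g).re) ∂μ :=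
        setAverage_mono_on hu₂ hbound_int hV_meas fun g _ => hbound g
    _ = _ := by rw [setAverage_eq, integral_const_mul, smul_eq_mul, measureReal_def]; ring

theorem posDef_convolution_approx_inequality
    {G : Type*} [AddCommGroup G] [TopologicalSpace G] [IsTopologicalAddGroup G]
    [LocallyCompactSpace G] [T2Space G] [MeasurableSpace G] [BorelSpace G]
    (μ : Measure G) [μ.IsAddHaarMeasure]
    (f : G → ℂ) (hf_cont : Continuous f) (hf_pd : IsPosDefC f)
    (V : Set G) (hV_symm : V = -V) (hV_nhds : V ∈ 𝓝 (0 : G))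
    (hV_cpt : IsCompact (closure V)) (hV_meas : MeasurableSet V)
    (χ : G → ℝ) (hχ : χ = Set.indicator V (fun _ => ((μ V).toReal)⁻¹)) :
    ∀ x : G,
      ‖f x - ∫ y, f y * (χ (x - y) : ℂ) ∂μ‖ ^ 2 ≤
        2 * (f 0).re * ((μ V).toReal)⁻¹ *
          ∫ g in V, ((f 0).re - (f g).re) ∂μ :=
  posDef_convolution_approx_inequality_general μ f hf_cont hf_pd V hV_symm hV_nhds hV_cpt hV_meas χ
    hχ
end

section
/- Let G be a locally compact Abelian group with Haar measure λ_G, Ω a closed set of finite measure, and (fₙ) a sequence of continuous functions G → ℝ with |fₙ| ≤ 1, supp (fₙ)₊ ⊆ Ω, and each fₙ integrable with ∫ fₙ dλ_G ≥ 0. If fₙ → f pointwise almost everywhere with f continuous, then supp f₊ ⊆ Ω, f ∈ L¹(G), and ∫_G f dλ_G ≥ limsupₙ ∫_G fₙ dλ_G. -/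
open MeasureTheory Filter Topology Complex ComplexOrder Pointwise

/-! Since `fₙ ≤ 𝟙_Ω`, Fatou's lemma applies to the nonnegative functions `𝟙_Ω - fₙ`, whose
integrals are at most `λ_G(Ω)` because `∫ fₙ ≥ 0`. Hence `𝟙_Ω - f` is integrable and
`∫ (𝟙_Ω - f) ≤ liminf ∫ (𝟙_Ω - fₙ) = λ_G(Ω) - limsup ∫ fₙ`. The support claim holds because
`f ≤ 0` almost everywhere on the open set `Ωᶜ`, and Haar measure charges every nonempty open set,
so the continuous `f` is `≤ 0` on all of `Ωᶜ`. -/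

theorem IsOpen.forall_le_of_ae_le {X β : Type*} [TopologicalSpace X] [MeasurableSpace X]
    {μ : Measure X} [μ.IsOpenPosMeasure] [TopologicalSpace β] [LinearOrder β]
    [OrderClosedTopology β] {U : Set X} (hU : IsOpen U) {f g : X → β}
    (hf : Continuous f) (hg : Continuous g) (h : ∀ᵐ x ∂μ, x ∈ U → f x ≤ g x) :
    ∀ x ∈ U, f x ≤ g x := by
  have hnull : μ (U ∩ {x | g x < f x}) = 0 := by
    refine measure_mono_null ?_ (MeasureTheory.ae_iff.1 h)
    exact fun x ⟨hxU, hlt⟩ himp => (himp hxU).not_gt hlt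
  have hempty := ((hU.inter (isOpen_lt hg hf)).measure_eq_zero_iff μ).1 hnull
  intro x hx
  by_contra hlt
  exact hempty.subset ⟨hx, not_le.1 hlt⟩

theorem closure_posPart_support_subset_iff {X : Type*} [TopologicalSpace X] {Ω : Set X}
    (hΩ : IsClosed Ω) {φ : X → ℝ} :
    closure {x | max (φ x) 0 ≠ 0} ⊆ Ω ↔ ∀ x ∉ Ω, φ x ≤ 0 := by
  rw [hΩ.closure_subset_iff]
  refine forall_congr' fun x => ?_
  rw [Set.mem_ofPred_eq, ne_eq, max_eq_right_iff, not_imp_comm]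

section Fatou

variable {α : Type*} [MeasurableSpace α] {μ : Measure α}

theorem integrable_and_integral_le_liminf_integral_of_tendsto_ae {G : ℕ → α → ℝ} {g : α → ℝ}
    {C : ℝ} (hG : ∀ n, Integrable (G n) μ) (hG_nonneg : ∀ n, 0 ≤ᵐ[μ] G n)
    (hC : ∀ n, ∫ x, G n x ∂μ ≤ C)
    (hlim : ∀ᵐ x ∂μ, Tendsto (fun n => G n x) atTop (𝓝 (g x))) :
    Integrable g μ ∧ ∫ x, g x ∂μ ≤ liminf (fun n => ∫ x, G n x ∂μ) atTop := by
  have hg_meas : AEStronglyMeasurable g μ :=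
    aestronglyMeasurable_of_tendsto_ae atTop (fun n => (hG n).1) hlim
  have hg_nonneg : 0 ≤ᵐ[μ] g := by
    filter_upwards [hlim, ae_all_iff.2 hG_nonneg] with x hx hx_nonneg
    exact ge_of_tendsto' hx hx_nonneg
  have hbdd : IsBoundedUnder (· ≥ ·) atTop fun n => ∫ x, G n x ∂μ :=
    isBoundedUnder_of ⟨0, fun n => integral_nonneg_of_ae (hG_nonneg n)⟩
  have hcobdd : IsCoboundedUnder (· ≥ ·) atTop fun n => ∫ x, G n x ∂μ :=
    isCoboundedUnder_ge_of_le atTop hC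
  have hliminf_nonneg : 0 ≤ liminf (fun n => ∫ x, G n x ∂μ) atTop :=
    le_liminf_of_le hcobdd (Eventually.of_forall fun n => integral_nonneg_of_ae (hG_nonneg n))
  have fatou : ∫⁻ x, ENNReal.ofReal (g x) ∂μ
      ≤ ENNReal.ofReal (liminf (fun n => ∫ x, G n x ∂μ) atTop) :=
    calc ∫⁻ x, ENNReal.ofReal (g x) ∂μ
        = ∫⁻ x, liminf (fun n => ENNReal.ofReal (G n x)) atTop ∂μ := by
          refine lintegral_congr_ae ?_
          filter_upwards [hlim] with x hx
          exact ((ENNReal.continuous_ofReal.tendsto _).comp hx).liminf_eq.symm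
      _ ≤ liminf (fun n => ∫⁻ x, ENNReal.ofReal (G n x) ∂μ) atTop :=
          lintegral_liminf_le' fun n => (hG n).1.aemeasurable.ennreal_ofReal
      _ = liminf (ENNReal.ofReal ∘ fun n => ∫ x, G n x ∂μ) atTop := by
          congr 1
          funext n
          exact (ofReal_integral_eq_lintegral_ofReal (hG n) (hG_nonneg n)).symm
      _ = _ := (ENNReal.ofReal_mono.map_liminf_of_continuousAt _
          ENNReal.continuous_ofReal.continuousAt hcobdd hbdd).symm
  have hg_int : Integrable g μ :=
    ⟨hg_meas, (hasFiniteIntegral_iff_ofReal hg_nonneg).2 (fatou.trans_lt ENNReal.ofReal_lt_top)⟩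
  refine ⟨hg_int, (ENNReal.ofReal_le_ofReal_iff hliminf_nonneg).1 ?_⟩
  rwa [ofReal_integral_eq_lintegral_ofReal hg_int hg_nonneg]

theorem integrable_and_limsup_integral_le_of_tendsto_ae {F : ℕ → α → ℝ} {f h : α → ℝ} {c : ℝ}
    (hF : ∀ n, Integrable (F n) μ) (hh : Integrable h μ) (hFh : ∀ n, F n ≤ᵐ[μ] h)
    (hc : ∀ n, c ≤ ∫ x, F n x ∂μ)
    (hlim : ∀ᵐ x ∂μ, Tendsto (fun n => F n x) atTop (𝓝 (f x))) :
    Integrable f μ ∧ limsup (fun n => ∫ x, F n x ∂μ) atTop ≤ ∫ x, f x ∂μ := by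
  have hsub n : ∫ x, (h - F n) x ∂μ = ∫ x, h x ∂μ - ∫ x, F n x ∂μ := integral_sub hh (hF n)
  obtain ⟨hhf_int, hhf_le⟩ :=
    integrable_and_integral_le_liminf_integral_of_tendsto_ae (g := h - f) (C := ∫ x, h x ∂μ - c)
      (fun n => hh.sub (hF n)) (fun n => (hFh n).mono fun x hx => sub_nonneg.2 hx)
      (fun n => by linarith [hsub n, hc n])
      (hlim.mono fun x hx => tendsto_const_nhds.sub hx)
  have hf_int : Integrable f μ := by simpa using hh.sub hhf_int
  have hliminf : liminf (fun n => ∫ x, (h - F n) x ∂μ) atTop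
      = ∫ x, h x ∂μ - limsup (fun n => ∫ x, F n x ∂μ) atTop := by
    simp only [hsub]
    have hanti : Antitone fun t => ∫ x, h x ∂μ - t := fun _ _ hst => sub_le_sub_left hst _
    exact (hanti.map_limsup_of_continuousAt _
      (continuous_const.sub continuous_id).continuousAt
      (isBoundedUnder_of ⟨∫ x, h x ∂μ, fun n => integral_mono_ae (hF n) hh (hFh n)⟩)
      (isCoboundedUnder_le_of_le atTop hc)).symm
  rw [hliminf, integral_sub' hh hf_int] at hhf_le
  exact ⟨hf_int, by linarith⟩

end Fatou

theorem limit_function_properties_general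
    {G : Type*} [AddCommGroup G] [TopologicalSpace G]
    [MeasurableSpace G] [BorelSpace G]
    (μ : Measure G) [μ.IsAddHaarMeasure]
    (Ω : Set G) (hΩ_closed : IsClosed Ω) (hΩfin : μ Ω < ⊤)
    (fseq : ℕ → G → ℝ)
    (hseq_bd : ∀ n g, |fseq n g| ≤ 1)
    (hseq_supp : ∀ n, closure {g : G | max (fseq n g) 0 ≠ 0} ⊆ Ω)
    (hseq_int : ∀ n, Integrable (fseq n) μ)
    (hseq_nonneg : ∀ n, 0 ≤ ∫ g, fseq n g ∂μ)
    (f : G → ℝ) (hf_cont : Continuous f)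
    (hae : ∀ᵐ g ∂μ, Tendsto (fun n => fseq n g) atTop (𝓝 (f g))) :
    closure {g : G | max (f g) 0 ≠ 0} ⊆ Ω ∧ Integrable f μ ∧
      Filter.limsup (fun n => ∫ g, fseq n g ∂μ) atTop ≤ ∫ g, f g ∂μ := by
  have hseq_out n : ∀ g ∉ Ω, fseq n g ≤ 0 :=
    (closure_posPart_support_subset_iff hΩ_closed).1 (hseq_supp n)
  have hf_out : ∀ g ∈ Ωᶜ, f g ≤ 0 := by
    refine hΩ_closed.isOpen_compl.forall_le_of_ae_le (μ := μ) hf_cont continuous_const ?_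
    filter_upwards [hae] with g hg hgΩ
    exact le_of_tendsto' hg fun n => hseq_out n g hgΩ
  have hseq_le_indicator n : fseq n ≤ Ω.indicator 1 := fun g => by
    by_cases hg : g ∈ Ω
    · simpa [hg] using (le_abs_self _).trans (hseq_bd n g)
    · simpa [hg] using hseq_out n g hg
  have hindicator : Integrable (Ω.indicator 1) μ :=
    (integrable_indicator_iff hΩ_closed.measurableSet).2 (integrableOn_const (C := (1 : ℝ)) hΩfin.ne)
  exact ⟨(closure_posPart_support_subset_iff hΩ_closed).2 hf_out,
    integrable_and_limsup_integral_le_of_tendsto_ae hseq_int hindicator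
      (fun n => ae_of_all _ (hseq_le_indicator n)) hseq_nonneg hae⟩

theorem limit_function_properties
    {G : Type*} [AddCommGroup G] [TopologicalSpace G] [IsTopologicalAddGroup G]
    [LocallyCompactSpace G] [T2Space G] [MeasurableSpace G] [BorelSpace G]
    (μ : Measure G) [μ.IsAddHaarMeasure]
    (Ω : Set G) (hΩ_closed : IsClosed Ω) (hΩfin : μ Ω < ⊤)
    (fseq : ℕ → G → ℝ) (hseq_cont : ∀ n, Continuous (fseq n))
    (hseq_bd : ∀ n g, |fseq n g| ≤ 1)
    (hseq_supp : ∀ n, closure {g : G | max (fseq n g) 0 ≠ 0} ⊆ Ω)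
    (hseq_int : ∀ n, Integrable (fseq n) μ)
    (hseq_nonneg : ∀ n, 0 ≤ ∫ g, fseq n g ∂μ)
    (f : G → ℝ) (hf_cont : Continuous f)
    (hae : ∀ᵐ g ∂μ, Tendsto (fun n => fseq n g) atTop (𝓝 (f g))) :
    closure {g : G | max (f g) 0 ≠ 0} ⊆ Ω ∧ Integrable f μ ∧
      Filter.limsup (fun n => ∫ g, fseq n g ∂μ) atTop ≤ ∫ g, f g ∂μ :=
  limit_function_properties_general μ Ω hΩ_closed hΩfin fseq hseq_bd hseq_supp hseq_int hseq_nonneg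
    f hf_cont hae
end
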